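/- arXiv:1906.03057 — 2 statements merged into one kernel-verified Lean document; each statement's English description precedes it below -/
import Mathlib

section
/- Let p be a prime and m a positive natural number. Then the p-adic valuation of the multinomial coefficient (p·m)! / (m!)^p equals the sum of the base-p digits of m. In particular, p divides (p·m)! / (m!)^p, so in a divided power algebra over a field of characteristic p one has γ_m(x)^p = 0 for all m ≥ 1. -/
/-!
Legendre's formula in the form `(p - 1) · v_p(n!) = n - s_p(n)`, together with
`v_p((p·m)!) = v_p(m!) + m`, gives `v_p((p·m)!) - p · v_p(m!) = m - (p - 1) · v_p(m!) = s_p(m)`.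
The digit sum of a positive number is positive, since its leading digit is nonzero.
-/

open Nat

theorem Nat.factorial_pow_dvd_factorial_mul (n m : ℕ) : m ! ^ n ∣ (n * m)! := by
  simpa [Finset.prod_const, Finset.sum_const] using
    Nat.prod_factorial_dvd_factorial_sum (Finset.range n) (fun _ => m)

theorem Nat.digits_sum_pos (b : ℕ) {m : ℕ} (hm : m ≠ 0) : 0 < (b.digits m).sum :=
  List.sum_pos_iff_exists_pos_nat.mpr
    ⟨_, List.getLast_mem (Nat.digits_ne_nil_iff_ne_zero.mpr hm),
      Nat.pos_of_ne_zero (Nat.getLast_digit_ne_zero b hm)⟩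

theorem padicValNat_factorial_mul_div_factorial_pow (p : ℕ) [Fact p.Prime] (m : ℕ) :
    padicValNat p ((p * m)! / m ! ^ p) = (p.digits m).sum := by
  have hp : 1 ≤ p := (Fact.out : p.Prime).one_le
  have legendre := sub_one_mul_padicValNat_factorial (p := p) m
  have digits_le := Nat.digit_sum_le p m
  rw [Nat.sub_one_mul] at legendre
  rw [padicValNat.div_of_dvd (Nat.factorial_pow_dvd_factorial_mul p m),
    padicValNat.pow, padicValNat_factorial_mul]
  have : padicValNat p m ! ≤ p * padicValNat p m ! := Nat.le_mul_of_pos_left _ hp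
  omega

/-- For a prime `p` and `m ≥ 1`, the `p`-adic valuation of the multinomial coefficient
`(p·m)! / (m!)^p` equals the sum of the base-`p` digits of `m`; in particular `p` divides
`(p·m)! / (m!)^p`. -/
theorem stmt_6 (p : ℕ) (hp : p.Prime) (m : ℕ) (hm : 1 ≤ m) :
    padicValNat p ((p * m).factorial / m.factorial ^ p) = (Nat.digits p m).sum ∧
      p ∣ (p * m).factorial / m.factorial ^ p := by
  have : Fact p.Prime := ⟨hp⟩
  have hval := padicValNat_factorial_mul_div_factorial_pow p m
  refine ⟨hval, dvd_of_one_le_padicValNat ?_⟩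
  rw [hval]
  exact Nat.digits_sum_pos p (by omega)
end

section
/- Let R be a commutative ring, ψ : R → R a ring homomorphism, G = ψ - id, and F : R → R an additive map satisfying F(ab) = F(a)·b + a·F(b) + F(a)·G(b) for all a, b ∈ R. Then for every n ≥ 1 and a ∈ R: F(a^n) = F(a) · (Σ_{i=0}^{n-1} C(n, n-1-i) · a^{n-1-i} · G(a)^i), where C(n,k) denotes the binomial coefficient. -/
/-- Key binomial sum identity used in the induction step. -/
lemma stmt_9_aux (R : Type*) [CommRing R] (a g : R) (n : ℕ) :
    a * ∑ i ∈ Finset.range n, (n.choose (n - 1 - i) : R) * a ^ (n - 1 - i) * g ^ i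
      + (a + g) ^ n
    = ∑ i ∈ Finset.range (n + 1),
        ((n + 1).choose (n - i) : R) * a ^ (n - i) * g ^ i := by
  rw [add_comm a g, add_pow, Finset.mul_sum, Finset.sum_range_succ,
    Finset.sum_range_succ (fun i => ((n + 1).choose (n - i) : R) * a ^ (n - i) * g ^ i)]
  have htop : ((n + 1).choose (n - n) : R) * a ^ (n - n) * g ^ n
      = g ^ n * a ^ (n - n) * (n.choose n : R) := by
    simp
  rw [htop, ← add_assoc, ← Finset.sum_add_distrib]
  congr 1
  apply Finset.sum_congr rfl
  intro i hi
  have hi' : i < n := Finset.mem_range.mp hi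
  have h1 : n - i = n - 1 - i + 1 := by omega
  have h2 : n.choose (n - 1 - i + 1) = n.choose i := by
    rw [← h1]
    exact Nat.choose_symm (by omega)
  rw [h1, Nat.choose_succ_succ, h2]
  push_cast
  rw [pow_succ]
  ring

/-- Let `ψ` be a ring endomorphism of `R`, `G = ψ - id`, and `F` an additive map satisfying
the twisted Leibniz rule `F(ab) = F(a)b + aF(b) + F(a)G(b)`.  Then
`F(a^n) = F(a) · ∑_{i=0}^{n-1} C(n, n-1-i) a^{n-1-i} G(a)^i` for all `n ≥ 1`. -/
theorem stmt_9 (R : Type*) [CommRing R] (ψ : R →+* R) (F : R →+ R)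
    (hF : ∀ a b : R, F (a * b) = F a * b + a * F b + F a * (ψ b - b)) :
    ∀ (n : ℕ), 1 ≤ n → ∀ a : R,
      F (a ^ n) =
        F a * ∑ i ∈ Finset.range n,
          (n.choose (n - 1 - i) : R) * a ^ (n - 1 - i) * (ψ a - a) ^ i := by
  intro n hn a
  induction n, hn using Nat.le_induction with
  | base => simp
  | succ n hn ih =>
    have key : F (a ^ (n + 1)) = a * F (a ^ n) + F a * (ψ a) ^ n := by
      rw [pow_succ, mul_comm (a ^ n) a, hF, ← map_pow]
      ring
    rw [key, ih]
    have hsum := stmt_9_aux R a (ψ a - a) n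
    rw [show a + (ψ a - a) = ψ a by ring] at hsum
    rw [show n + 1 - 1 = n from rfl]
    rw [← hsum]
    ring
end
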